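/- Consider a multi-hop channel with nodes 0, 1, …, n+1 (node 0 the source, nodes 1,…,n relays, node n+1 the destination), deadline T > 0, nondecreasing harvested-energy curves E_0, …, E_n : [0,T] → [0,∞), nondecreasing arrival-data curve B_s : [0,T] → [0,∞) and rate functions r_0, …, r_n. Set B*_{−1} = B_s and, for i = 0, …, n, let B*_i : [0,T] → [0,∞) be the transmitted data curve of some power policy feasible for (E_i, B*_{i−1}, r_i) such that: B*_i is convex; B*_i(T) ≥ ∫₀ᵀ r_i(p(s)) ds for every policy p feasible for (E_i, B*_{i−1}, r_i); and on every open interval on which B*_i is not affine, B*_i(t) ≥ ∫₀ᵗ r_i(p(s)) ds for every such feasible p and every t in that interval. Then the multi-hop maximum throughput D(T) (the supremum of ∫₀ᵀ r_n(p_n) over all multi-hop feasible tuples (p_0,…,p_n)) equals B*_n(T); i.e., the optimal multi-hop throughput is obtained by cascading point-to-point throughput maximization problems hop by hop. -/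

import Mathlib

open MeasureTheory Set Filter intervalIntegral

noncomputable section

/-- A rate function: continuous, strictly increasing, concave on `[0,∞)`,
vanishing at `0` and tending to `∞`. -/
def IsRateFunction (r : ℝ → ℝ) : Prop :=
  ContinuousOn r (Set.Ici 0) ∧ StrictMonoOn r (Set.Ici 0) ∧
    ConcaveOn ℝ (Set.Ici 0) r ∧ r 0 = 0 ∧
    Filter.Tendsto r Filter.atTop Filter.atTop

/-- Multi-hop feasibility of a tuple of power policies `p 0, …, p n` on `[0,T]`
for a chain with `n` relays: node `i` transmits with power policy `p i` over the
hop with rate function `r i`, using harvested energy `E i`; `Bs` is the arrival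
data curve at the source (node `0`). -/
def MultiHopFeasible (n : ℕ) (T : ℝ) (E : ℕ → ℝ → ℝ) (Bs : ℝ → ℝ)
    (r : ℕ → ℝ → ℝ) (p : ℕ → ℝ → ℝ) : Prop :=
  (∀ i ≤ n, IntervalIntegrable (p i) MeasureTheory.volume 0 T) ∧
  (∀ i ≤ n, IntervalIntegrable (fun s => r i (p i s)) MeasureTheory.volume 0 T) ∧
  (∀ i ≤ n, ∀ t ∈ Set.Icc (0:ℝ) T, 0 ≤ p i t) ∧
  (∀ i ≤ n, ∀ t ∈ Set.Icc (0:ℝ) T, (∫ s in (0:ℝ)..t, p i s) ≤ E i t) ∧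
  (∀ t ∈ Set.Icc (0:ℝ) T, (∫ s in (0:ℝ)..t, r 0 (p 0 s)) ≤ Bs t) ∧
  (∀ i : ℕ, i + 1 ≤ n → ∀ t ∈ Set.Icc (0:ℝ) T,
    (∫ s in (0:ℝ)..t, r (i+1) (p (i+1) s)) ≤ ∫ s in (0:ℝ)..t, r i (p i s))

/-- The multi-hop maximum throughput by deadline `T`. -/
def MultiHopThroughput (n : ℕ) (E : ℕ → ℝ → ℝ) (Bs : ℝ → ℝ)
    (r : ℕ → ℝ → ℝ) (T : ℝ) : ℝ :=
  sSup {x : ℝ | ∃ p : ℕ → ℝ → ℝ, MultiHopFeasible n T E Bs r p ∧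
    x = ∫ t in (0:ℝ)..T, r n (p n t)}

/-- An integrable power policy `p` is feasible for harvested energy `E`,
arrival data `B` and rate function `r` on `[0,T]`. -/
def Feasible (T : ℝ) (E B r p : ℝ → ℝ) : Prop :=
  IntervalIntegrable p MeasureTheory.volume 0 T ∧
  IntervalIntegrable (fun s => r (p s)) MeasureTheory.volume 0 T ∧
  (∀ t ∈ Set.Icc (0:ℝ) T, 0 ≤ p t) ∧
  (∀ t ∈ Set.Icc (0:ℝ) T, (∫ s in (0:ℝ)..t, p s) ≤ E t) ∧
  (∀ t ∈ Set.Icc (0:ℝ) T, (∫ s in (0:ℝ)..t, r (p s)) ≤ B t)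

/-!
A policy achieving the cascade is multi-hop feasible, so it remains to bound the throughput of
an arbitrary multi-hop feasible tuple. Hop by hop, the data curve `D_k` of hop `k` satisfies
`D_k T ≤ B*_k T`, and `D_k ≤ B*_k` everywhere unless `B*_k` is linear. When `D_k ≤ B*_k`, the
policy of hop `k + 1` is feasible for the input `B*_k` and the optimality of `B*_{k+1}` applies.
When `B*_k t = m t`, the relay may receive more than `B*_k` before `T`. Still, on any `(0, b]`
where `B*_{k+1}` stays strictly below `B*_k`, mixing a fraction `κ` of the relay's policy,
switched on after some `a > 0`, into the optimal policy of hop `k + 1` keeps data causality for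
`B*_k` once `κ` is small (dominated convergence), and by concavity of the rate the mixture
delivers at least `(1 - κ) B*_{k+1} b + κ (D_{k+1} b - D_{k+1} a)` by time `b`. Its optimality
and `a → 0` give `D_{k+1} b ≤ B*_{k+1} b`. By convexity, `B*_{k+1} < m t` on `(0, T)` unless
`B*_{k+1}` is linear.
-/

open Topology

theorem IntervalIntegrable.mono_Icc {f : ℝ → ℝ} {a b c d : ℝ}
    (hf : IntervalIntegrable f volume a b) (hc : c ∈ Icc a b) (hd : d ∈ Icc a b) :
    IntervalIntegrable f volume c d :=
  hf.mono_set (uIcc_subset_uIcc (Icc_subset_uIcc hc) (Icc_subset_uIcc hd))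

theorem ae_restrict_uIoc_mem_Icc {a b : ℝ} (hab : a ≤ b) :
    ∀ᵐ s ∂volume.restrict (uIoc a b), s ∈ Icc a b := by
  rw [uIoc_of_le hab]
  exact (ae_restrict_mem measurableSet_Ioc).mono fun s hs => Ioc_subset_Icc_self hs

theorem IsCompact.exists_pos_add_le {α : Type*} [TopologicalSpace α] {K : Set α}
    {f g : α → ℝ} (hK : IsCompact K) (hf : ContinuousOn f K) (hg : ContinuousOn g K)
    (hlt : ∀ x ∈ K, f x < g x) : ∃ ε > 0, ∀ x ∈ K, f x + ε ≤ g x := by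
  rcases K.eq_empty_or_nonempty with rfl | hne
  · exact ⟨1, one_pos, by simp⟩
  obtain ⟨x₀, hx₀, hmin⟩ := hK.exists_isMinOn hne (hg.sub hf)
  refine ⟨g x₀ - f x₀, sub_pos.2 (hlt x₀ hx₀), fun x hx => ?_⟩
  have := isMinOn_iff.1 hmin x hx
  simp only [Pi.sub_apply] at this
  linarith

theorem ConvexOn.eqOn_of_isMaxOn {f : ℝ → ℝ} {a b c : ℝ} (hf : ConvexOn ℝ (Icc a b) f)
    (hc : c ∈ Ioo a b) (hmax : IsMaxOn f (Icc a b) c) : EqOn f (fun _ => f c) (Icc a b) := by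
  intro x hx
  refine le_antisymm (hmax hx) ?_
  rcases lt_trichotomy x c with hxc | rfl | hcx
  · exact hf.le_left_of_right_le hx (right_mem_Icc.2 (hc.1.trans hc.2).le)
      (by rw [openSegment_eq_Ioo (hxc.trans hc.2)]; exact ⟨hxc, hc.2⟩)
      (hmax (right_mem_Icc.2 (hc.1.trans hc.2).le))
  · exact le_rfl
  · exact hf.le_right_of_left_le (left_mem_Icc.2 (hc.1.trans hc.2).le) hx
      (by rw [openSegment_eq_Ioo (hc.1.trans hcx)]; exact ⟨hc.1, hcx⟩)
      (hmax (left_mem_Icc.2 (hc.1.trans hc.2).le))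

theorem ConvexOn.lt_mul_of_le_mul {f : ℝ → ℝ} {T m : ℝ} (hf : ConvexOn ℝ (Icc 0 T) f)
    (hle : ∀ t ∈ Icc 0 T, f t ≤ m * t) (hne : ¬ ∀ t ∈ Icc 0 T, f t = m * t) :
    ∀ t ∈ Ioo 0 T, f t < m * t := by
  intro t ht
  refine (hle t (Ioo_subset_Icc_self ht)).lt_of_ne fun heq => hne fun x hx => ?_
  have hg : ConvexOn ℝ (Icc 0 T) (fun x => f x - m * x) :=
    hf.sub ((LinearMap.mul ℝ ℝ m).concaveOn (convex_Icc 0 T))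
  have hmax : IsMaxOn (fun x => f x - m * x) (Icc 0 T) t :=
    fun y hy => by simp only [mem_ofPred_eq, heq, sub_self, sub_nonpos]; exact hle y hy
  have := hg.eqOn_of_isMaxOn ht hmax hx
  simp only [heq, sub_self] at this
  linarith

theorem eq_mul_of_eq_affine_on_Ioo {f : ℝ → ℝ} {T m c : ℝ} (hT : 0 < T)
    (hf : ContinuousOn f (Icc 0 T)) (hf0 : f 0 = 0) (h : ∀ t ∈ Ioo 0 T, f t = m * t + c) :
    ∀ t ∈ Icc 0 T, f t = m * t := by
  have hIcc : EqOn f (fun t => m * t + c) (Icc 0 T) :=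
    EqOn.of_subset_closure h hf (by fun_prop) Ioo_subset_Icc_self (closure_Ioo hT.ne).ge
  have hc : 0 = c := by simpa [hf0] using hIcc (left_mem_Icc.2 hT.le)
  intro t ht
  simpa [← hc] using hIcc ht

namespace IsRateFunction

variable {r : ℝ → ℝ}

theorem map_zero (hr : IsRateFunction r) : r 0 = 0 := hr.2.2.2.1

theorem mono (hr : IsRateFunction r) {x y : ℝ} (hx : 0 ≤ x) (hxy : x ≤ y) : r x ≤ r y :=
  hr.2.1.monotoneOn hx (hx.trans hxy) hxy

theorem nonneg (hr : IsRateFunction r) {x : ℝ} (hx : 0 ≤ x) : 0 ≤ r x :=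
  hr.map_zero ▸ hr.mono le_rfl hx

theorem le_map_combo (hr : IsRateFunction r) {κ x y : ℝ} (hκ : κ ∈ Icc (0 : ℝ) 1)
    (hx : 0 ≤ x) (hy : 0 ≤ y) : (1 - κ) * r x + κ * r y ≤ r ((1 - κ) * x + κ * y) :=
  hr.2.2.1.2 hx hy (sub_nonneg.2 hκ.2) hκ.1 (sub_add_cancel 1 κ)

theorem mul_le_map_mul (hr : IsRateFunction r) {κ x : ℝ} (hκ : κ ∈ Icc (0 : ℝ) 1)
    (hx : 0 ≤ x) : κ * r x ≤ r (κ * x) := by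
  simpa [hr.map_zero] using hr.le_map_combo hκ le_rfl hx

theorem map_add_le (hr : IsRateFunction r) {x y : ℝ} (hx : 0 ≤ x) (hy : 0 ≤ y) :
    r (x + y) ≤ r x + r y := by
  rcases (add_nonneg hx hy).eq_or_lt with hxy | hxy
  · simp [show x = 0 by linarith, show y = 0 by linarith, hr.map_zero]
  have hκ : x / (x + y) ∈ Icc (0 : ℝ) 1 :=
    ⟨by positivity, (div_le_one hxy).2 (by linarith)⟩
  have hκ' : y / (x + y) ∈ Icc (0 : ℝ) 1 :=
    ⟨by positivity, (div_le_one hxy).2 (by linarith)⟩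
  have h1 := hr.mul_le_map_mul hκ (add_nonneg hx hy)
  have h2 := hr.mul_le_map_mul hκ' (add_nonneg hx hy)
  rw [div_mul_cancel₀ _ hxy.ne'] at h1 h2
  have : x / (x + y) * r (x + y) + y / (x + y) * r (x + y) = r (x + y) := by
    field_simp
  linarith

theorem continuous_comp_max (hr : IsRateFunction r) : Continuous fun x => r (max x 0) :=
  hr.1.comp_continuous (continuous_id.max continuous_const) fun _ => mem_Ici.2 (le_max_right _ _)

theorem aestronglyMeasurable_comp (hr : IsRateFunction r) {μ : Measure ℝ} {f : ℝ → ℝ}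
    (hf : AEStronglyMeasurable f μ) (hnn : ∀ᵐ s ∂μ, 0 ≤ f s) :
    AEStronglyMeasurable (fun s => r (f s)) μ :=
  (hr.continuous_comp_max.comp_aestronglyMeasurable hf).congr <|
    hnn.mono fun s hs => by simp [max_eq_left hs]

theorem intervalIntegrable_comp (hr : IsRateFunction r) {a b : ℝ} {f g : ℝ → ℝ}
    (hab : a ≤ b)
    (hf : IntervalIntegrable f volume a b) (hnn : ∀ s ∈ Icc a b, 0 ≤ f s)
    (hg : IntervalIntegrable g volume a b) (hle : ∀ s ∈ Icc a b, r (f s) ≤ g s) :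
    IntervalIntegrable (fun s => r (f s)) volume a b := by
  have hIcc := ae_restrict_uIoc_mem_Icc hab
  refine hg.mono_fun' (hr.aestronglyMeasurable_comp hf.def'.aestronglyMeasurable
    (hIcc.mono fun s hs => hnn s hs)) (hIcc.mono fun s hs => ?_)
  simpa [abs_of_nonneg (hr.nonneg (hnn s hs))] using hle s hs

theorem intervalIntegrable_comp_mul (hr : IsRateFunction r) {T κ : ℝ} {p : ℝ → ℝ}
    (hT : 0 ≤ T) (hκ : κ ∈ Icc (0 : ℝ) 1) (hp : IntervalIntegrable p volume 0 T)
    (hnn : ∀ s ∈ Icc 0 T, 0 ≤ p s) (hrp : IntervalIntegrable (fun s => r (p s)) volume 0 T) :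
    IntervalIntegrable (fun s => r (κ * p s)) volume 0 T :=
  hr.intervalIntegrable_comp hT (hp.const_mul κ) (fun s hs => mul_nonneg hκ.1 (hnn s hs)) hrp
    fun s hs => hr.mono (mul_nonneg hκ.1 (hnn s hs)) (mul_le_of_le_one_left (hnn s hs) hκ.2)

theorem exists_integral_comp_mul_lt (hr : IsRateFunction r) {T ε : ℝ} {p : ℝ → ℝ}
    (hT : 0 ≤ T) (hp : IntervalIntegrable p volume 0 T) (hnn : ∀ s ∈ Icc 0 T, 0 ≤ p s)
    (hrp : IntervalIntegrable (fun s => r (p s)) volume 0 T) (hε : 0 < ε) :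
    ∃ κ ∈ Ioo (0 : ℝ) 1, ∫ s in (0 : ℝ)..T, r (κ * p s) < ε := by
  have hunit : ∀ᶠ κ in 𝓝[>] (0 : ℝ), κ ∈ Ioo (0 : ℝ) 1 := Ioo_mem_nhdsGT one_pos
  have hnn' : ∀ s ∈ uIoc 0 T, 0 ≤ p s := fun s hs =>
    hnn s (Ioc_subset_Icc_self (by rwa [uIoc_of_le hT] at hs))
  have hlim : Tendsto (fun κ => ∫ s in (0 : ℝ)..T, r (κ * p s)) (𝓝[>] 0) (𝓝 0) := by
    have hdct := intervalIntegral.tendsto_integral_filter_of_dominated_convergence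
      (f := fun _ => (0 : ℝ)) (fun s => r (p s))
      (hunit.mono fun κ hκ => (hr.intervalIntegrable_comp_mul hT (Ioo_subset_Icc_self hκ) hp hnn
        hrp).def'.aestronglyMeasurable)
      (hunit.mono fun κ hκ => ae_of_all _ fun s hs => ?_) hrp (ae_of_all _ fun s hs => ?_)
    · simpa using hdct
    · have hκp := mul_nonneg hκ.1.le (hnn' s hs)
      rw [Real.norm_eq_abs, abs_of_nonneg (hr.nonneg hκp)]
      exact hr.mono hκp (mul_le_of_le_one_left (hnn' s hs) hκ.2.le)
    · have hto : Tendsto (fun κ => κ * p s) (𝓝[>] 0) (𝓝[Ici 0] 0) :=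
        tendsto_nhdsWithin_iff.2
          ⟨((continuous_mul_const (p s)).tendsto' 0 0 (zero_mul _)).mono_left nhdsWithin_le_nhds,
            eventually_nhdsWithin_of_forall fun κ hκ => mul_nonneg (le_of_lt hκ) (hnn' s hs)⟩
      have hcont := (hr.1 0 self_mem_Ici).tendsto.comp hto
      rwa [hr.map_zero] at hcont
  exact ((hlim.eventually (gt_mem_nhds hε)).and hunit).exists.imp fun κ h => ⟨h.2, h.1⟩

end IsRateFunction

namespace Feasible

variable {T t : ℝ} {E B B' r p : ℝ → ℝ}

theorem intervalIntegrable (h : Feasible T E B r p) : IntervalIntegrable p volume 0 T := h.1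

theorem intervalIntegrable_rate (h : Feasible T E B r p) :
    IntervalIntegrable (fun s => r (p s)) volume 0 T :=
  h.2.1

theorem nonneg (h : Feasible T E B r p) : ∀ t ∈ Icc 0 T, 0 ≤ p t := h.2.2.1

theorem energy_le (h : Feasible T E B r p) :
    ∀ t ∈ Icc 0 T, ∫ s in (0 : ℝ)..t, p s ≤ E t :=
  h.2.2.2.1

theorem data_le (h : Feasible T E B r p) :
    ∀ t ∈ Icc 0 T, ∫ s in (0 : ℝ)..t, r (p s) ≤ B t :=
  h.2.2.2.2

theorem mono_data (h : Feasible T E B r p) (hB : ∀ t ∈ Icc 0 T, B t ≤ B' t) :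
    Feasible T E B' r p :=
  ⟨h.1, h.2.1, h.2.2.1, h.2.2.2.1, fun t ht => (h.data_le t ht).trans (hB t ht)⟩

theorem continuousOn_integral_rate (h : Feasible T E B r p) (hT : 0 ≤ T) :
    ContinuousOn (fun t => ∫ s in (0 : ℝ)..t, r (p s)) (Icc 0 T) := by
  simpa [uIcc_of_le hT] using continuousOn_primitive_interval' h.intervalIntegrable_rate
    (left_mem_uIcc : (0 : ℝ) ∈ uIcc 0 T)

theorem monotoneOn_integral_rate (h : Feasible T E B r p) (hr : IsRateFunction r) :
    MonotoneOn (fun t => ∫ s in (0 : ℝ)..t, r (p s)) (Icc 0 T) := by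
  intro s hs t ht hst
  refine integral_mono_interval le_rfl hs.1 hst ?_
    (h.intervalIntegrable_rate.mono_Icc ⟨le_rfl, ht.1.trans ht.2⟩ ht)
  filter_upwards [ae_restrict_mem measurableSet_Ioc] with u hu
  exact hr.nonneg (h.nonneg u ⟨hu.1.le, hu.2.trans ht.2⟩)

end Feasible

-- The `p` part starts after `a` and everything stops after `b`: `po` leaves no slack near `0`,
-- and possibly none after `b`.
def mixPolicy (κ a b : ℝ) (po p : ℝ → ℝ) : ℝ → ℝ :=
  (Iic b).indicator fun s => (1 - κ) * po s + κ * (Ioi a).indicator p s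

section mixPolicy

variable {T a b κ ε s t : ℝ} {E B B' r po p : ℝ → ℝ}

theorem mixPolicy_of_le (hsa : s ≤ a) (hsb : s ≤ b) :
    mixPolicy κ a b po p s = (1 - κ) * po s := by
  simp [mixPolicy, hsb, not_lt.2 hsa]

theorem mixPolicy_of_mem_Ioc (hs : s ∈ Ioc a b) :
    mixPolicy κ a b po p s = (1 - κ) * po s + κ * p s := by
  simp [mixPolicy, hs.2, hs.1]

theorem mixPolicy_of_lt (hs : b < s) : mixPolicy κ a b po p s = 0 := by
  simp [mixPolicy, hs]

theorem mixPolicy_nonneg (hκ : κ ∈ Icc (0 : ℝ) 1) (hpo : 0 ≤ po s) (hp : 0 ≤ p s) :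
    0 ≤ mixPolicy κ a b po p s := by
  have := sub_nonneg.2 hκ.2
  have := hκ.1
  simp only [mixPolicy, indicator_apply]
  split_ifs <;> positivity

theorem mixPolicy_le (hκ : κ ∈ Icc (0 : ℝ) 1) (hpo : 0 ≤ po s) (hp : 0 ≤ p s) :
    mixPolicy κ a b po p s ≤ (1 - κ) * po s + κ * p s := by
  have := sub_nonneg.2 hκ.2
  have := hκ.1
  simp only [mixPolicy, indicator_apply]
  split_ifs <;> nlinarith

theorem IsRateFunction.map_mixPolicy_le (hr : IsRateFunction r) (hκ : κ ∈ Icc (0 : ℝ) 1)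
    (hpo : 0 ≤ po s) (hp : 0 ≤ p s) :
    r (mixPolicy κ a b po p s) ≤ r (po s) + r (κ * p s) := by
  have hpo' : 0 ≤ (1 - κ) * po s := mul_nonneg (sub_nonneg.2 hκ.2) hpo
  have hp' : 0 ≤ κ * p s := mul_nonneg hκ.1 hp
  calc r (mixPolicy κ a b po p s) ≤ r ((1 - κ) * po s + κ * p s) :=
        hr.mono (mixPolicy_nonneg hκ hpo hp) (mixPolicy_le hκ hpo hp)
    _ ≤ r ((1 - κ) * po s) + r (κ * p s) := hr.map_add_le hpo' hp'
    _ ≤ r (po s) + r (κ * p s) := by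
        gcongr
        exact hr.mono hpo' (mul_le_of_le_one_left hpo (by linarith [hκ.1]))

theorem intervalIntegrable_mixPolicy (hT : 0 ≤ T) (hκ : κ ∈ Icc (0 : ℝ) 1)
    (hpo : Feasible T E B r po) (hp : Feasible T E B' r p) :
    IntervalIntegrable (mixPolicy κ a b po p) volume 0 T := by
  have hmeas : AEStronglyMeasurable (mixPolicy κ a b po p) (volume.restrict (uIoc 0 T)) :=
    ((hpo.intervalIntegrable.def'.1.const_mul _).add
      ((hp.intervalIntegrable.def'.1.indicator measurableSet_Ioi).const_mul _)).indicator
        measurableSet_Iic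
  refine ((hpo.intervalIntegrable.const_mul (1 - κ)).add
    (hp.intervalIntegrable.const_mul κ)).mono_fun' hmeas
    ((ae_restrict_uIoc_mem_Icc hT).mono fun s hs => ?_)
  have hq := mixPolicy_nonneg (a := a) (b := b) hκ (hpo.nonneg s hs) (hp.nonneg s hs)
  simpa [abs_of_nonneg hq] using mixPolicy_le hκ (hpo.nonneg s hs) (hp.nonneg s hs)

theorem IsRateFunction.intervalIntegrable_comp_mixPolicy (hr : IsRateFunction r) (hT : 0 ≤ T)
    (hκ : κ ∈ Icc (0 : ℝ) 1) (hpo : Feasible T E B r po) (hp : Feasible T E B' r p) :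
    IntervalIntegrable (fun s => r (mixPolicy κ a b po p s)) volume 0 T :=
  hr.intervalIntegrable_comp hT (intervalIntegrable_mixPolicy hT hκ hpo hp)
    (fun s hs => mixPolicy_nonneg hκ (hpo.nonneg s hs) (hp.nonneg s hs))
    (hpo.intervalIntegrable_rate.add (hr.intervalIntegrable_comp_mul hT hκ hp.intervalIntegrable
      hp.nonneg hp.intervalIntegrable_rate))
    fun s hs => hr.map_mixPolicy_le hκ (hpo.nonneg s hs) (hp.nonneg s hs)

theorem integral_mixPolicy_le (hκ : κ ∈ Icc (0 : ℝ) 1) (hpo : Feasible T E B r po)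
    (hp : Feasible T E B' r p) (ht : t ∈ Icc 0 T) :
    ∫ s in (0 : ℝ)..t, mixPolicy κ a b po p s ≤ E t := by
  have hT := ht.1.trans ht.2
  have h0 : (0 : ℝ) ∈ Icc 0 T := ⟨le_rfl, hT⟩
  have hpo_t := (hpo.intervalIntegrable.mono_Icc h0 ht).const_mul (1 - κ)
  have hp_t := (hp.intervalIntegrable.mono_Icc h0 ht).const_mul κ
  calc ∫ s in (0 : ℝ)..t, mixPolicy κ a b po p s
      ≤ ∫ s in (0 : ℝ)..t, ((1 - κ) * po s + κ * p s) :=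
        integral_mono_on ht.1 ((intervalIntegrable_mixPolicy hT hκ hpo hp).mono_Icc h0 ht)
          (hpo_t.add hp_t) fun s hs => mixPolicy_le hκ (hpo.nonneg s ⟨hs.1, hs.2.trans ht.2⟩)
            (hp.nonneg s ⟨hs.1, hs.2.trans ht.2⟩)
    _ = (1 - κ) * (∫ s in (0 : ℝ)..t, po s) + κ * ∫ s in (0 : ℝ)..t, p s := by
        rw [integral_add hpo_t hp_t, intervalIntegral.integral_const_mul,
          intervalIntegral.integral_const_mul]
    _ ≤ (1 - κ) * E t + κ * E t := by
        gcongr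
        exacts [sub_nonneg.2 hκ.2, hpo.energy_le t ht, hκ.1, hp.energy_le t ht]
    _ = E t := by ring

theorem IsRateFunction.integral_comp_mixPolicy_le (hr : IsRateFunction r)
    (hκ : κ ∈ Icc (0 : ℝ) 1) (hpo : Feasible T E B r po) (hp : Feasible T E B' r p)
    (hsmall : ∫ s in (0 : ℝ)..T, r (κ * p s) ≤ ε)
    (hslack : ∀ t ∈ Icc a b, (∫ s in (0 : ℝ)..t, r (po s)) + ε ≤ B t)
    (ht : t ∈ Icc 0 T) (htb : t ≤ b) :
    ∫ s in (0 : ℝ)..t, r (mixPolicy κ a b po p s) ≤ B t := by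
  have hT := ht.1.trans ht.2
  have h0 : (0 : ℝ) ∈ Icc 0 T := ⟨le_rfl, hT⟩
  have hrq := (hr.intervalIntegrable_comp_mixPolicy (a := a) (b := b) hT hκ hpo hp).mono_Icc h0 ht
  have hrpo := hpo.intervalIntegrable_rate.mono_Icc h0 ht
  have hrκp := hr.intervalIntegrable_comp_mul hT hκ hp.intervalIntegrable hp.nonneg
    hp.intervalIntegrable_rate
  have hnn : ∀ s ∈ Icc 0 t, 0 ≤ po s ∧ 0 ≤ p s :=
    fun s hs => have hs' : s ∈ Icc 0 T := ⟨hs.1, hs.2.trans ht.2⟩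
      ⟨hpo.nonneg s hs', hp.nonneg s hs'⟩
  rcases le_or_gt t a with hta | hta
  · refine (integral_mono_on ht.1 hrq hrpo fun s hs => ?_).trans (hpo.data_le t ht)
    rw [mixPolicy_of_le (hs.2.trans hta) (hs.2.trans htb)]
    exact hr.mono (mul_nonneg (sub_nonneg.2 hκ.2) (hnn s hs).1)
      (mul_le_of_le_one_left (hnn s hs).1 (by linarith [hκ.1]))
  have hκp : ∫ s in (0 : ℝ)..t, r (κ * p s) ≤ ε := by
    refine (integral_mono_interval le_rfl ht.1 ht.2 ?_ hrκp).trans hsmall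
    filter_upwards [ae_restrict_mem measurableSet_Ioc] with s hs
    exact hr.nonneg (mul_nonneg hκ.1 (hp.nonneg s (Ioc_subset_Icc_self hs)))
  calc ∫ s in (0 : ℝ)..t, r (mixPolicy κ a b po p s)
      ≤ ∫ s in (0 : ℝ)..t, (r (po s) + r (κ * p s)) :=
        integral_mono_on ht.1 hrq (hrpo.add (hrκp.mono_Icc h0 ht))
          fun s hs => hr.map_mixPolicy_le hκ (hnn s hs).1 (hnn s hs).2
    _ = (∫ s in (0 : ℝ)..t, r (po s)) + ∫ s in (0 : ℝ)..t, r (κ * p s) :=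
        integral_add hrpo (hrκp.mono_Icc h0 ht)
    _ ≤ B t := by linarith [hslack t ⟨hta.le, htb⟩]

theorem IsRateFunction.integral_comp_mixPolicy_of_le (hr : IsRateFunction r)
    (hκ : κ ∈ Icc (0 : ℝ) 1) (hpo : Feasible T E B r po) (hp : Feasible T E B' r p)
    (hb : 0 ≤ b) (ht : t ∈ Icc b T) :
    ∫ s in (0 : ℝ)..t, r (mixPolicy κ a b po p s)
      = ∫ s in (0 : ℝ)..b, r (mixPolicy κ a b po p s) := by
  have hT := hb.trans (ht.1.trans ht.2)
  have hrq := hr.intervalIntegrable_comp_mixPolicy (a := a) (b := b) hT hκ hpo hp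
  rw [← integral_add_adjacent_intervals (hrq.mono_Icc ⟨le_rfl, hT⟩ ⟨hb, ht.1.trans ht.2⟩)
    (hrq.mono_Icc ⟨hb, ht.1.trans ht.2⟩ ⟨hb.trans ht.1, ht.2⟩), add_eq_left]
  refine integral_zero_ae (ae_of_all _ fun s hs => ?_)
  rw [uIoc_of_le ht.1] at hs
  rw [mixPolicy_of_lt hs.1, hr.map_zero]

theorem IsRateFunction.feasible_mixPolicy (hr : IsRateFunction r)
    (hB : MonotoneOn B (Icc 0 T)) (hκ : κ ∈ Icc (0 : ℝ) 1)
    (hpo : Feasible T E B r po) (hp : Feasible T E B' r p) (hb : b ∈ Icc 0 T)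
    (hsmall : ∫ s in (0 : ℝ)..T, r (κ * p s) ≤ ε)
    (hslack : ∀ t ∈ Icc a b, (∫ s in (0 : ℝ)..t, r (po s)) + ε ≤ B t) :
    Feasible T E B r (mixPolicy κ a b po p) := by
  have hT := hb.1.trans hb.2
  refine ⟨intervalIntegrable_mixPolicy hT hκ hpo hp,
    hr.intervalIntegrable_comp_mixPolicy hT hκ hpo hp,
    fun s hs => mixPolicy_nonneg hκ (hpo.nonneg s hs) (hp.nonneg s hs),
    fun t ht => integral_mixPolicy_le hκ hpo hp ht, fun t ht => ?_⟩
  rcases le_or_gt t b with htb | hbt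
  · exact hr.integral_comp_mixPolicy_le hκ hpo hp hsmall hslack ht htb
  · rw [hr.integral_comp_mixPolicy_of_le hκ hpo hp hb.1 ⟨hbt.le, ht.2⟩]
    exact (hr.integral_comp_mixPolicy_le hκ hpo hp hsmall hslack hb le_rfl).trans
      (hB hb ht hbt.le)

theorem IsRateFunction.le_integral_comp_mixPolicy (hr : IsRateFunction r)
    (hκ : κ ∈ Icc (0 : ℝ) 1) (hpo : Feasible T E B r po) (hp : Feasible T E B' r p)
    (ha : 0 ≤ a) (hab : a ≤ b) (hbT : b ≤ T) :
    (1 - κ) * (∫ s in (0 : ℝ)..b, r (po s)) + κ * ∫ s in a..b, r (p s)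
      ≤ ∫ s in (0 : ℝ)..b, r (mixPolicy κ a b po p s) := by
  have hT := ha.trans (hab.trans hbT)
  have h0 : (0 : ℝ) ∈ Icc 0 T := ⟨le_rfl, hT⟩
  have haT : a ∈ Icc 0 T := ⟨ha, hab.trans hbT⟩
  have hbT' : b ∈ Icc 0 T := ⟨ha.trans hab, hbT⟩
  have hrq := hr.intervalIntegrable_comp_mixPolicy (a := a) (b := b) hT hκ hpo hp
  have hrpo := hpo.intervalIntegrable_rate
  have hrp_ab := (hp.intervalIntegrable_rate.mono_Icc haT hbT').const_mul κ
  have hinit : (1 - κ) * (∫ s in (0 : ℝ)..a, r (po s))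
      ≤ ∫ s in (0 : ℝ)..a, r (mixPolicy κ a b po p s) := by
    rw [← intervalIntegral.integral_const_mul]
    refine integral_mono_on ha ((hrpo.mono_Icc h0 haT).const_mul _) (hrq.mono_Icc h0 haT)
      fun s hs => ?_
    rw [mixPolicy_of_le hs.2 (hs.2.trans hab)]
    exact hr.mul_le_map_mul ⟨sub_nonneg.2 hκ.2, by linarith [hκ.1]⟩
      (hpo.nonneg s ⟨hs.1, hs.2.trans haT.2⟩)
  have hmix : (1 - κ) * (∫ s in a..b, r (po s)) + κ * ∫ s in a..b, r (p s)
      ≤ ∫ s in a..b, r (mixPolicy κ a b po p s) := by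
    rw [← intervalIntegral.integral_const_mul, ← intervalIntegral.integral_const_mul,
      ← integral_add ((hrpo.mono_Icc haT hbT').const_mul _) hrp_ab]
    refine integral_mono_on_of_le_Ioo hab (((hrpo.mono_Icc haT hbT').const_mul _).add hrp_ab)
      (hrq.mono_Icc haT hbT') fun s hs => ?_
    have hsT : s ∈ Icc 0 T := ⟨ha.trans hs.1.le, hs.2.le.trans hbT⟩
    rw [mixPolicy_of_mem_Ioc ⟨hs.1, hs.2.le⟩]
    exact hr.le_map_combo hκ (hpo.nonneg s hsT) (hp.nonneg s hsT)
  rw [← integral_add_adjacent_intervals (hrpo.mono_Icc h0 haT) (hrpo.mono_Icc haT hbT'),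
    ← integral_add_adjacent_intervals (hrq.mono_Icc h0 haT) (hrq.mono_Icc haT hbT')]
  linarith

end mixPolicy

variable {T b : ℝ} {E B B' r po p : ℝ → ℝ} in
theorem IsRateFunction.integral_le_of_lt_on_Ioc (hr : IsRateFunction r)
    (hBm : MonotoneOn B (Icc 0 T)) (hBc : ContinuousOn B (Icc 0 T))
    (hpo : Feasible T E B r po) (hb : b ∈ Ioc 0 T)
    (hgap : ∀ t ∈ Ioc 0 b, ∫ s in (0 : ℝ)..t, r (po s) < B t)
    (hmax : ∀ q, Feasible T E B r q →
      ∫ s in (0 : ℝ)..b, r (q s) ≤ ∫ s in (0 : ℝ)..b, r (po s))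
    (hp : Feasible T E B' r p) :
    ∫ s in (0 : ℝ)..b, r (p s) ≤ ∫ s in (0 : ℝ)..b, r (po s) := by
  have hT : 0 ≤ T := hb.1.le.trans hb.2
  have hbT : b ∈ Icc 0 T := Ioc_subset_Icc_self hb
  have htail : ∀ a ∈ Ioo 0 b, ∫ s in a..b, r (p s) ≤ ∫ s in (0 : ℝ)..b, r (po s) := by
    intro a ha
    have hsub : Icc a b ⊆ Icc 0 T := Icc_subset_Icc ha.1.le hb.2
    obtain ⟨ε, hε, hslack⟩ := isCompact_Icc.exists_pos_add_le
      ((hpo.continuousOn_integral_rate hT).mono hsub) (hBc.mono hsub)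
      fun t ht => hgap t ⟨ha.1.trans_le ht.1, ht.2⟩
    obtain ⟨κ, hκ, hsmall⟩ := hr.exists_integral_comp_mul_lt hT hp.intervalIntegrable
      hp.nonneg hp.intervalIntegrable_rate hε
    have hκ' : κ ∈ Icc (0 : ℝ) 1 := Ioo_subset_Icc_self hκ
    have hlow := hr.le_integral_comp_mixPolicy hκ' hpo hp ha.1.le ha.2.le hb.2
    have hup := hmax _ (hr.feasible_mixPolicy hBm hκ' hpo hp hbT hsmall.le hslack)
    exact le_of_mul_le_mul_left (by linarith) hκ.1
  have hcont : ContinuousOn (fun a => ∫ s in a..b, r (p s)) (Icc 0 b) := by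
    have hint : IntegrableOn (fun s => r (p s)) (uIcc 0 b) := by
      rw [uIcc_of_le hb.1.le]
      exact (intervalIntegrable_iff_integrableOn_Icc_of_le hb.1.le).1
        (hp.intervalIntegrable_rate.mono_Icc ⟨le_rfl, hT⟩ hbT)
    simpa [uIcc_of_le hb.1.le] using continuousOn_primitive_interval_left hint
  simpa using le_on_closure htail (by rwa [closure_Ioo hb.1.ne]) continuousOn_const
    (by rw [closure_Ioo hb.1.ne]; exact left_mem_Icc.2 hb.1.le)

/-- `Bo` is the point-to-point optimal data curve of the hop `(E, B, r)`, transmitted by `po`. -/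
structure IsOptimalDataCurve (T : ℝ) (E B r po Bo : ℝ → ℝ) : Prop where
  feasible : Feasible T E B r po
  eq_integral : ∀ t ∈ Icc (0 : ℝ) T, Bo t = ∫ s in (0 : ℝ)..t, r (po s)
  convexOn : ConvexOn ℝ (Icc 0 T) Bo
  integral_le : ∀ p, Feasible T E B r p → ∫ s in (0 : ℝ)..T, r (p s) ≤ Bo T
  integral_le_of_not_affine :
    (¬ ∃ mc : ℝ × ℝ, ∀ t ∈ Ioo 0 T, Bo t = mc.1 * t + mc.2) →
    ∀ p, Feasible T E B r p → ∀ t ∈ Ioo 0 T, ∫ s in (0 : ℝ)..t, r (p s) ≤ Bo t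

/-- The invariant carried along the chain: pointwise domination of the transmitted curve `D`
can only fail when `Bo` is linear. -/
def IsCascadeBound (T : ℝ) (Bo D : ℝ → ℝ) : Prop :=
  D T ≤ Bo T ∧
    ((∃ m : ℝ, ∀ t ∈ Icc 0 T, Bo t = m * t) ∨ ∀ t ∈ Icc 0 T, D t ≤ Bo t)

namespace IsOptimalDataCurve

variable {T m : ℝ} {E B B' r po Bo p : ℝ → ℝ}

theorem map_zero (h : IsOptimalDataCurve T E B r po Bo) (hT : 0 ≤ T) : Bo 0 = 0 := by
  rw [h.eq_integral 0 ⟨le_rfl, hT⟩, integral_same]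

theorem continuousOn (h : IsOptimalDataCurve T E B r po Bo) (hT : 0 ≤ T) :
    ContinuousOn Bo (Icc 0 T) :=
  (h.feasible.continuousOn_integral_rate hT).congr h.eq_integral

theorem monotoneOn (h : IsOptimalDataCurve T E B r po Bo) (hr : IsRateFunction r) :
    MonotoneOn Bo (Icc 0 T) :=
  (h.feasible.monotoneOn_integral_rate hr).congr fun t ht => (h.eq_integral t ht).symm

theorem exists_eq_mul (h : IsOptimalDataCurve T E B r po Bo) (hT : 0 < T)
    (haff : ∃ mc : ℝ × ℝ, ∀ t ∈ Ioo 0 T, Bo t = mc.1 * t + mc.2) :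
    ∃ m : ℝ, ∀ t ∈ Icc 0 T, Bo t = m * t :=
  let ⟨mc, hmc⟩ := haff
  ⟨mc.1, eq_mul_of_eq_affine_on_Ioo hT (h.continuousOn hT.le) (h.map_zero hT.le) hmc⟩

theorem isCascadeBound_of_feasible (h : IsOptimalDataCurve T E B r po Bo) (hT : 0 < T)
    (hp : Feasible T E B r p) : IsCascadeBound T Bo fun t => ∫ s in (0 : ℝ)..t, r (p s) := by
  refine ⟨h.integral_le p hp, or_iff_not_imp_left.2 fun hlin t ht => ?_⟩
  rcases ht.1.eq_or_lt with rfl | h0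
  · simp [h.map_zero hT.le]
  rcases ht.2.eq_or_lt with rfl | htT
  · exact h.integral_le p hp
  exact h.integral_le_of_not_affine (fun haff => hlin (h.exists_eq_mul hT haff)) p hp t
    ⟨h0, htT⟩

theorem integral_le_of_eq_mul_of_lt (h : IsOptimalDataCurve T E B r po Bo) (hT : 0 < T)
    (hr : IsRateFunction r) (hBm : MonotoneOn B (Icc 0 T)) (hBc : ContinuousOn B (Icc 0 T))
    (hm : ∀ t ∈ Icc 0 T, B t = m * t) {c : ℝ} (hc : ∀ t ∈ Icc 0 T, Bo t = c * t)
    (hcm : c < m) (hp : Feasible T E B' r p) : ∫ s in (0 : ℝ)..T, r (p s) ≤ Bo T := by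
  have hTT : T ∈ Icc 0 T := ⟨hT.le, le_rfl⟩
  rw [h.eq_integral T hTT]
  refine hr.integral_le_of_lt_on_Ioc hBm hBc h.feasible ⟨hT, le_rfl⟩ (fun t ht => ?_)
    (fun q hq => ?_) hp
  · rw [← h.eq_integral t (Ioc_subset_Icc_self ht), hc t (Ioc_subset_Icc_self ht),
      hm t (Ioc_subset_Icc_self ht)]
    exact mul_lt_mul_of_pos_right hcm ht.1
  · rw [← h.eq_integral T hTT]
    exact h.integral_le q hq

theorem integral_le_of_eq_mul_of_not_linear (h : IsOptimalDataCurve T E B r po Bo) (hT : 0 < T)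
    (hr : IsRateFunction r) (hBm : MonotoneOn B (Icc 0 T)) (hBc : ContinuousOn B (Icc 0 T))
    (hm : ∀ t ∈ Icc 0 T, B t = m * t) (hlin : ¬ ∃ c : ℝ, ∀ t ∈ Icc 0 T, Bo t = c * t)
    (hp : Feasible T E B' r p) : ∀ t ∈ Icc 0 T, ∫ s in (0 : ℝ)..t, r (p s) ≤ Bo t := by
  have hle : ∀ t ∈ Icc 0 T, Bo t ≤ m * t := fun t ht => by
    rw [h.eq_integral t ht, ← hm t ht]
    exact h.feasible.data_le t ht
  have hgap := h.convexOn.lt_mul_of_le_mul hle fun heq => hlin ⟨m, heq⟩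
  have hpt : ∀ t ∈ Ioo 0 T, ∫ s in (0 : ℝ)..t, r (p s) ≤ Bo t := by
    intro t ht
    rw [h.eq_integral t (Ioo_subset_Icc_self ht)]
    refine hr.integral_le_of_lt_on_Ioc hBm hBc h.feasible ⟨ht.1, ht.2.le⟩ (fun s hs => ?_)
      (fun q hq => ?_) hp
    · have hs' : s ∈ Ioo 0 T := ⟨hs.1, hs.2.trans_lt ht.2⟩
      rw [← h.eq_integral s (Ioo_subset_Icc_self hs'), hm s (Ioo_subset_Icc_self hs')]
      exact hgap s hs'
    · rw [← h.eq_integral t (Ioo_subset_Icc_self ht)]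
      exact h.integral_le_of_not_affine (fun haff => hlin (h.exists_eq_mul hT haff)) q hq t ht
  intro t ht
  exact le_on_closure hpt (by rw [closure_Ioo hT.ne]; exact hp.continuousOn_integral_rate hT.le)
    (by rw [closure_Ioo hT.ne]; exact h.continuousOn hT.le) (by rwa [closure_Ioo hT.ne])

theorem isCascadeBound_of_eq_mul (h : IsOptimalDataCurve T E B r po Bo) (hT : 0 < T)
    (hr : IsRateFunction r) (hBm : MonotoneOn B (Icc 0 T)) (hBc : ContinuousOn B (Icc 0 T))
    (hm : ∀ t ∈ Icc 0 T, B t = m * t) (hpT : ∫ s in (0 : ℝ)..T, r (p s) ≤ m * T)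
    (hp : Feasible T E B' r p) : IsCascadeBound T Bo fun t => ∫ s in (0 : ℝ)..t, r (p s) := by
  by_cases hlin : ∃ c : ℝ, ∀ t ∈ Icc 0 T, Bo t = c * t
  · refine ⟨?_, Or.inl hlin⟩
    obtain ⟨c, hc⟩ := hlin
    rcases le_or_gt m c with hmc | hcm
    · calc ∫ s in (0 : ℝ)..T, r (p s) ≤ m * T := hpT
        _ ≤ c * T := by gcongr
        _ = Bo T := (hc T ⟨hT.le, le_rfl⟩).symm
    · exact h.integral_le_of_eq_mul_of_lt hT hr hBm hBc hm hc hcm hp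
  · have hall := h.integral_le_of_eq_mul_of_not_linear hT hr hBm hBc hm hlin hp
    exact ⟨hall T ⟨hT.le, le_rfl⟩, Or.inr hall⟩

theorem isCascadeBound (h : IsOptimalDataCurve T E B r po Bo) (hT : 0 < T)
    (hr : IsRateFunction r) (hBm : MonotoneOn B (Icc 0 T)) (hBc : ContinuousOn B (Icc 0 T))
    {D : ℝ → ℝ} (hD : IsCascadeBound T B D) (hp : Feasible T E D r p) :
    IsCascadeBound T Bo fun t => ∫ s in (0 : ℝ)..t, r (p s) := by
  have hTT : T ∈ Icc 0 T := ⟨hT.le, le_rfl⟩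
  obtain ⟨hDT, ⟨m, hm⟩ | hDB⟩ := hD
  · exact h.isCascadeBound_of_eq_mul hT hr hBm hBc hm
      ((hp.data_le T hTT).trans (hDT.trans (hm T hTT).le)) hp
  · exact h.isCascadeBound_of_feasible hT (hp.mono_data hDB)

end IsOptimalDataCurve

theorem multiHopFeasible_iff {n : ℕ} {T : ℝ} {E : ℕ → ℝ → ℝ} {Bs : ℝ → ℝ}
    {r p : ℕ → ℝ → ℝ} :
    MultiHopFeasible n T E Bs r p ↔ Feasible T (E 0) Bs (r 0) (p 0) ∧
      ∀ i, i + 1 ≤ n →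
        Feasible T (E (i + 1)) (fun t => ∫ s in (0 : ℝ)..t, r i (p i s)) (r (i + 1))
          (p (i + 1)) := by
  constructor
  · rintro ⟨hI, hIr, hnn, hE, hBs, hchain⟩
    exact ⟨⟨hI 0 n.zero_le, hIr 0 n.zero_le, hnn 0 n.zero_le, hE 0 n.zero_le, hBs⟩,
      fun i hi => ⟨hI _ hi, hIr _ hi, hnn _ hi, hE _ hi, hchain i hi⟩⟩
  · rintro ⟨h0, hsucc⟩
    have hf : ∀ i ≤ n, ∃ B, Feasible T (E i) B (r i) (p i) := by
      rintro (_ | i) hi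
      exacts [⟨_, h0⟩, ⟨_, hsucc i hi⟩]
    exact ⟨fun i hi => (hf i hi).choose_spec.intervalIntegrable,
      fun i hi => (hf i hi).choose_spec.intervalIntegrable_rate,
      fun i hi => (hf i hi).choose_spec.nonneg, fun i hi => (hf i hi).choose_spec.energy_le,
      h0.data_le, fun i hi => (hsucc i hi).data_le⟩

theorem multihop_decomposition_general
    (n : ℕ) (T : ℝ) (hT : 0 < T)
    (E : ℕ → ℝ → ℝ) (Bs : ℝ → ℝ) (r : ℕ → ℝ → ℝ)
    (hr : ∀ i ≤ n, IsRateFunction (r i))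
    (pstar : ℕ → ℝ → ℝ)
    (Bstar : ℕ → ℝ → ℝ)
    (hBstar_def : ∀ i ≤ n, ∀ t ∈ Set.Icc (0:ℝ) T,
      Bstar i t = ∫ s in (0:ℝ)..t, r i (pstar i s))
    -- the arrival data curve at node `i`: `B*_{-1} = B_s` and `B*_{i-1}` after
    (Bprev : ℕ → ℝ → ℝ)
    (hBprev_zero : Bprev 0 = Bs)
    (hBprev_succ : ∀ i : ℕ, Bprev (i + 1) = Bstar i)
    -- `pstar i` is feasible for `(E i, B*_{i-1}, r i)`
    (hpstar_feasible : ∀ i ≤ n, Feasible T (E i) (Bprev i) (r i) (pstar i))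
    -- each `B*_i` is convex
    (hBstar_convex : ∀ i ≤ n, ConvexOn ℝ (Set.Icc 0 T) (Bstar i))
    -- each `B*_i` maximizes the final transmitted data over its hop
    (hBstar_max : ∀ i ≤ n, ∀ p : ℝ → ℝ, Feasible T (E i) (Bprev i) (r i) p →
      (∫ s in (0:ℝ)..T, r i (p s)) ≤ Bstar i T)
    -- on every open subinterval of `[0,T]` on which `B*_i` is not affine,
    -- `B*_i` pointwise dominates every feasible transmitted data curve
    (hBstar_ptwise : ∀ i ≤ n, ∀ a b : ℝ, 0 ≤ a → a < b → b ≤ T →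
      ¬ (∃ mc : ℝ × ℝ, ∀ t ∈ Set.Ioo a b, Bstar i t = mc.1 * t + mc.2) →
      ∀ p : ℝ → ℝ, Feasible T (E i) (Bprev i) (r i) p →
        ∀ t ∈ Set.Ioo a b, (∫ s in (0:ℝ)..t, r i (p s)) ≤ Bstar i t) :
    MultiHopThroughput n E Bs r T = Bstar n T := by
  have hopt : ∀ i ≤ n, IsOptimalDataCurve T (E i) (Bprev i) (r i) (pstar i) (Bstar i) :=
    fun i hi => ⟨hpstar_feasible i hi, hBstar_def i hi, hBstar_convex i hi, hBstar_max i hi,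
      hBstar_ptwise i hi 0 T le_rfl hT le_rfl⟩
  have hpstar : MultiHopFeasible n T E Bs r pstar := by
    refine multiHopFeasible_iff.2 ⟨hBprev_zero ▸ hpstar_feasible 0 n.zero_le, fun i hi => ?_⟩
    exact (hBprev_succ i ▸ hpstar_feasible (i + 1) hi).mono_data
      fun t ht => (hBstar_def i (by omega) t ht).le
  have hbound : ∀ p, MultiHopFeasible n T E Bs r p →
      ∫ t in (0:ℝ)..T, r n (p n t) ≤ Bstar n T := by
    intro p hp
    obtain ⟨hp0, hsucc⟩ := multiHopFeasible_iff.1 hp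
    have hcascade : ∀ k ≤ n,
        IsCascadeBound T (Bstar k) fun t => ∫ s in (0:ℝ)..t, r k (p k s) := by
      intro k
      induction k with
      | zero => exact fun hk => (hopt 0 hk).isCascadeBound_of_feasible hT (hBprev_zero ▸ hp0)
      | succ k ih =>
        intro hk
        have hk' : k ≤ n := by omega
        exact (hBprev_succ k ▸ hopt (k + 1) hk).isCascadeBound hT (hr _ hk)
          ((hopt k hk').monotoneOn (hr k hk')) ((hopt k hk').continuousOn hT.le) (ih hk')
          (hsucc k hk)
    exact (hcascade n le_rfl).1
  exact IsGreatest.csSup_eq ⟨⟨pstar, hpstar, hBstar_def n le_rfl T ⟨hT.le, le_rfl⟩⟩,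
    fun _ ⟨p, hp, hx⟩ => hx ▸ hbound p hp⟩

/-- Corollary 1: the optimal multi-hop throughput is obtained by cascading
point-to-point throughput maximization problems hop by hop: the source sends the
point-to-point optimal curve `B*₀` to relay 1, which treats it as its arrival
data curve and sends the point-to-point optimal curve `B*₁` to relay 2, and so
on; the multi-hop maximum throughput equals `B*ₙ(T)`. -/
theorem multihop_decomposition
    (n : ℕ) (T : ℝ) (hT : 0 < T)
    (E : ℕ → ℝ → ℝ) (Bs : ℝ → ℝ) (r : ℕ → ℝ → ℝ)
    (hE_nonneg : ∀ i ≤ n, ∀ t ∈ Set.Icc (0:ℝ) T, 0 ≤ E i t)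
    (hE_mono : ∀ i ≤ n, MonotoneOn (E i) (Set.Icc 0 T))
    (hBs_nonneg : ∀ t ∈ Set.Icc (0:ℝ) T, 0 ≤ Bs t)
    (hBs_mono : MonotoneOn Bs (Set.Icc 0 T))
    (hr : ∀ i ≤ n, IsRateFunction (r i))
    (pstar : ℕ → ℝ → ℝ)
    (Bstar : ℕ → ℝ → ℝ)
    (hBstar_def : ∀ i ≤ n, ∀ t ∈ Set.Icc (0:ℝ) T,
      Bstar i t = ∫ s in (0:ℝ)..t, r i (pstar i s))
    -- the arrival data curve at node `i`: `B*_{-1} = B_s` and `B*_{i-1}` after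
    (Bprev : ℕ → ℝ → ℝ)
    (hBprev_zero : Bprev 0 = Bs)
    (hBprev_succ : ∀ i : ℕ, Bprev (i + 1) = Bstar i)
    -- `pstar i` is feasible for `(E i, B*_{i-1}, r i)`
    (hpstar_feasible : ∀ i ≤ n, Feasible T (E i) (Bprev i) (r i) (pstar i))
    -- each `B*_i` is convex
    (hBstar_convex : ∀ i ≤ n, ConvexOn ℝ (Set.Icc 0 T) (Bstar i))
    -- each `B*_i` maximizes the final transmitted data over its hop
    (hBstar_max : ∀ i ≤ n, ∀ p : ℝ → ℝ, Feasible T (E i) (Bprev i) (r i) p →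
      (∫ s in (0:ℝ)..T, r i (p s)) ≤ Bstar i T)
    -- on every open subinterval of `[0,T]` on which `B*_i` is not affine,
    -- `B*_i` pointwise dominates every feasible transmitted data curve
    (hBstar_ptwise : ∀ i ≤ n, ∀ a b : ℝ, 0 ≤ a → a < b → b ≤ T →
      ¬ (∃ mc : ℝ × ℝ, ∀ t ∈ Set.Ioo a b, Bstar i t = mc.1 * t + mc.2) →
      ∀ p : ℝ → ℝ, Feasible T (E i) (Bprev i) (r i) p →
        ∀ t ∈ Set.Ioo a b, (∫ s in (0:ℝ)..t, r i (p s)) ≤ Bstar i t) :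
    MultiHopThroughput n E Bs r T = Bstar n T :=
  multihop_decomposition_general n T hT E Bs r hr pstar Bstar hBstar_def Bprev hBprev_zero
    hBprev_succ hpstar_feasible hBstar_convex hBstar_max hBstar_ptwise
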